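/- Let φ ∈ C²(ℝ^n), u ∈ U fixed, and suppose for x ∈ ℝ^n the matrix A with entries a_{ij} = ⟨σ^i(x,u), D_x⟨σ^j(·,u), Dφ(·)⟩(x)⟩ is symmetric negative semidefinite and ⟨b̃(x,u), Dφ(x)⟩ ≤ 0, where b̃(x,u) = b(x,u) − (1/2) Σ_i ⟨D_xσ^i(x,u), σ^i(x,u)⟩. Then ⟨b(x,u), Dφ(x)⟩ + (1/2) tr(D²φ(x) σ(x,u) σ*(x,u)) ≤ 0. -/

import Mathlib

/-!
Differentiating `y ↦ Dφ(y) σⁱ(y)` along `σⁱ` gives `D²φ(σⁱ, σⁱ) + Dφ(Dσⁱ σⁱ)`, so the diagonal of `A`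
is the Hessian term plus the Itô–Stratonovich correction. Hence the second-order operator equals
`⟨b̃, Dφ⟩ + ½ tr A`, and `tr A ≤ 0` because every diagonal entry of a negative semidefinite
quadratic form is `≤ 0`.
-/

open Matrix

theorem Matrix.diag_nonpos_of_dotProduct_mulVec_nonpos {ι R : Type*} [Fintype ι] [DecidableEq ι]
    [NonAssocSemiring R] [Preorder R] {A : Matrix ι ι R} (hA : ∀ z, z ⬝ᵥ A *ᵥ z ≤ 0) (i : ι) :
    A i i ≤ 0 := by
  simpa [mulVec_single_one, single_one_dotProduct] using hA (Pi.single i 1)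

theorem Matrix.trace_nonpos_of_dotProduct_mulVec_nonpos {ι R : Type*} [Fintype ι] [DecidableEq ι]
    [NonAssocSemiring R] [PartialOrder R] [IsOrderedAddMonoid R] {A : Matrix ι ι R}
    (hA : ∀ z, z ⬝ᵥ A *ᵥ z ≤ 0) : A.trace ≤ 0 :=
  Finset.sum_nonpos fun i _ => diag_nonpos_of_dotProduct_mulVec_nonpos hA i

section StratonovichCorrection

variable {E F : Type*} [NormedAddCommGroup E] [NormedSpace ℝ E]
  [NormedAddCommGroup F] [NormedSpace ℝ F] {x : E}

theorem fderiv_fderiv_apply {φ : E → F} {τ : E → E}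
    (hφ : DifferentiableAt ℝ (fderiv ℝ φ) x) (hτ : DifferentiableAt ℝ τ x) (v : E) :
    fderiv ℝ (fun y => fderiv ℝ φ y (τ y)) x v =
      fderiv ℝ (fderiv ℝ φ) x v (τ x) + fderiv ℝ φ x (fderiv ℝ τ x v) := by
  rw [fderiv_clm_apply hφ hτ, add_comm]
  rfl

theorem ito_generator_eq_stratonovich_drift_add_half_sum {ι : Type*} [Fintype ι] {φ : E → ℝ}
    {σ : ι → E → E} (hφ : DifferentiableAt ℝ (fderiv ℝ φ) x)
    (hσ : ∀ i, DifferentiableAt ℝ (σ i) x) (b : E) :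
    fderiv ℝ φ x b + (1 / 2) * ∑ i, fderiv ℝ (fderiv ℝ φ) x (σ i x) (σ i x) =
      fderiv ℝ φ x (b - (1 / 2 : ℝ) • ∑ i, fderiv ℝ (σ i) x (σ i x)) +
        (1 / 2) * ∑ i, fderiv ℝ (fun y => fderiv ℝ φ y (σ i y)) x (σ i x) := by
  simp only [fderiv_fderiv_apply hφ (hσ _), Finset.sum_add_distrib, map_sub, map_smul, map_sum,
    smul_eq_mul]
  ring

end StratonovichCorrection

theorem stmt_17_general {n d : ℕ} (φ : (Fin n → ℝ) → ℝ) (hφ : ContDiff ℝ 2 φ)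
    (σc : Fin d → (Fin n → ℝ) → (Fin n → ℝ)) (hσ : ∀ i, Differentiable ℝ (σc i))
    (b x : Fin n → ℝ)
    (A : Matrix (Fin d) (Fin d) ℝ)
    (hA : ∀ i j, A i j = fderiv ℝ (fun y => fderiv ℝ φ y (σc j y)) x (σc i x))
    (hAneg : ∀ z : Fin d → ℝ, z ⬝ᵥ A.mulVec z ≤ 0)
    (hdrift : fderiv ℝ φ x
        (b - (1 / 2 : ℝ) • ∑ i, fderiv ℝ (σc i) x (σc i x)) ≤ 0) :
    fderiv ℝ φ x b +
        (1 / 2) * ∑ i, fderiv ℝ (fderiv ℝ φ) x (σc i x) (σc i x) ≤ 0 := by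
  have hDφ : DifferentiableAt ℝ (fderiv ℝ φ) x :=
    (hφ.fderiv_right (m := 1) le_rfl).differentiable one_ne_zero x
  have htrace : ∑ i, fderiv ℝ (fun y => fderiv ℝ φ y (σc i y)) x (σc i x) = A.trace := by
    simp only [trace, diag, hA]
  rw [ito_generator_eq_stratonovich_drift_add_half_sum hDφ (fun i => (hσ i).differentiableAt),
    htrace]
  linarith [trace_nonpos_of_dotProduct_mulVec_nonpos hAneg]

theorem stmt_17 {n d : ℕ} (φ : (Fin n → ℝ) → ℝ) (hφ : ContDiff ℝ 2 φ)
    (σc : Fin d → (Fin n → ℝ) → (Fin n → ℝ)) (hσ : ∀ i, Differentiable ℝ (σc i))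
    (b x : Fin n → ℝ)
    (A : Matrix (Fin d) (Fin d) ℝ)
    (hA : ∀ i j, A i j = fderiv ℝ (fun y => fderiv ℝ φ y (σc j y)) x (σc i x))
    (hAsymm : A.IsSymm) (hAneg : ∀ z : Fin d → ℝ, z ⬝ᵥ A.mulVec z ≤ 0)
    (hdrift : fderiv ℝ φ x
        (b - (1 / 2 : ℝ) • ∑ i, fderiv ℝ (σc i) x (σc i x)) ≤ 0) :
    fderiv ℝ φ x b +
        (1 / 2) * ∑ i, fderiv ℝ (fderiv ℝ φ) x (σc i x) (σc i x) ≤ 0 :=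
  stmt_17_general φ hφ σc hσ b x A hA hAneg hdrift
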